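/- Let n be a natural number and R₀ > 0. Let h : ℝ × ℝⁿ → ℝ be C², and α : ℝ × ℝⁿ → ℝⁿ be C¹. Define Φ : ℝ × ℝⁿ → ℝ × ℝ × ℝⁿ × ℝⁿ by Φ(r, q) = (r, h(r,q), q, α(r,q)). For a point x = (r, z, q, p) define the alternating bilinear form Ω_x on ℝ × ℝ × ℝⁿ × ℝⁿ by Ω_x((a₁,b₁,v₁,w₁),(a₂,b₂,v₂,w₂)) = a₁·(⟨p, v₂⟩ − b₂) − a₂·(⟨p, v₁⟩ − b₁) + r·(⟨w₁, v₂⟩ − ⟨w₂, v₁⟩), where ⟨·,·⟩ is the Euclidean dot product (Ω is the 2-form d(r(p·dq − dz)) in coordinates). Write ∇_q h(a, q) ∈ ℝⁿ for the gradient of the function q ↦ h(a, q). Then the following are equivalent: (a) for every r ≥ R₀, every q ∈ ℝⁿ, and all ξ, η ∈ ℝ × ℝⁿ, Ω_{Φ(r,q)}(DΦ(r,q)(ξ), DΦ(r,q)(η)) = 0 (the image of Φ over {r ≥ R₀} is Lagrangian); (b) there exists a C¹ map β : ℝⁿ → ℝⁿ whose derivative is symmetric at every point (⟨Dβ(q)v,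 w⟩ = ⟨Dβ(q)w, v⟩ for all q, v, w, i.e. β is a closed 1-form) such that for all r ≥ R₀ and all q ∈ ℝⁿ, r·α(r, q) = ∫_{R₀}^r ∇_q h(a, q) da + β(q). -/

import Mathlib

/-!
Expanding `Ω` on the image of `DΦ(r, q)` in terms of `∂ᵣα`, the partial gradient `∇_q h` and the
partial derivative `D_q α` shows that, for `r ≠ 0`, the image is isotropic at `Φ(r, q)` iff
`∂ᵣ(r α(r, q)) = ∇_q h(r, q)` and `D_q α(r, q)` is symmetric. By the fundamental theorem of
calculus the first condition integrates to `r α(r, q) = ∫_{R₀}^r ∇_q h(a, q) da + β(q)` with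
`β(q) = R₀ α(R₀, q)`, and the second makes `β` closed. Conversely, differentiating the formula in
`r` recovers the first condition, while differentiating it in `q` writes `r D_q α` as `Dβ` plus the
Hessian of `q ↦ ∫_{R₀}^r h(a, q) da`, which is symmetric.
-/

open scoped RealInnerProductSpace

/-- The coordinate 2-form `Ω = d(r(p·dq - dz))` on `ℝ × ℝ × ℝⁿ × ℝⁿ` (coordinates
`(r, z, q, p)`), evaluated at the point `x` on the pair of tangent vectors
`V₁ = (a₁, b₁, v₁, w₁)` and `V₂ = (a₂, b₂, v₂, w₂)`. -/
noncomputable def coneForm {n : ℕ}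
    (x V₁ V₂ : ℝ × ℝ × EuclideanSpace ℝ (Fin n) × EuclideanSpace ℝ (Fin n)) : ℝ :=
  V₁.1 * ((inner ℝ x.2.2.2 V₂.2.2.1 : ℝ) - V₂.2.1)
    - V₂.1 * ((inner ℝ x.2.2.2 V₁.2.2.1 : ℝ) - V₁.2.1)
    + x.1 * ((inner ℝ V₁.2.2.2 V₂.2.2.1 : ℝ) - (inner ℝ V₂.2.2.2 V₁.2.2.1 : ℝ))

/-- The parametrization `Φ(r,q) = (r, h(r,q), q, α(r,q))` of the asymptotically conic
Lagrangian end written in Darboux normal form. -/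
noncomputable def coneParam {n : ℕ}
    (h : ℝ × EuclideanSpace ℝ (Fin n) → ℝ)
    (α : ℝ × EuclideanSpace ℝ (Fin n) → EuclideanSpace ℝ (Fin n))
    (p : ℝ × EuclideanSpace ℝ (Fin n)) :
    ℝ × ℝ × EuclideanSpace ℝ (Fin n) × EuclideanSpace ℝ (Fin n) :=
  (p.1, h p, p.2, α p)

open ContinuousLinearMap InnerProductSpace MeasureTheory Set Filter Topology

section Slices

variable {E F : Type*} [NormedAddCommGroup E] [NormedSpace ℝ E]
  [NormedAddCommGroup F] [NormedSpace ℝ F]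

theorem ContinuousLinearMap.apply_prod_eq (L : ℝ × E →L[ℝ] F) (ξ : ℝ × E) :
    L ξ = ξ.1 • L (1, 0) + L.comp (inr ℝ ℝ E) ξ.2 := by
  conv_lhs => rw [show ξ = ξ.1 • ((1 : ℝ), (0 : E)) + ((0 : ℝ), ξ.2) by ext <;> simp]
  rw [map_add, map_smul, comp_apply, inr_apply]

theorem DifferentiableAt.hasFDerivAt_slice {f : ℝ × E → F} {t : ℝ} {y : E}
    (hf : DifferentiableAt ℝ f (t, y)) :
    HasFDerivAt (fun y => f (t, y)) ((fderiv ℝ f (t, y)).comp (inr ℝ ℝ E)) y :=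
  hf.hasFDerivAt.comp y (hasFDerivAt_prodMk_right t y)

theorem DifferentiableAt.hasDerivAt_smul_slice {f : ℝ × E → F} {t : ℝ} {y : E}
    (hf : DifferentiableAt ℝ f (t, y)) :
    HasDerivAt (fun s => s • f (s, y)) (f (t, y) + t • fderiv ℝ f (t, y) (1, 0)) t := by
  have hslice : HasDerivAt (fun s => f (s, y)) (fderiv ℝ f (t, y) (1, 0)) t :=
    hf.hasFDerivAt.comp_hasDerivAt t ((hasDerivAt_id t).prodMk (hasDerivAt_const t y))
  have hsmul := (hasDerivAt_id' t).smul hslice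
  simp only [one_smul, add_comm] at hsmul
  exact hsmul

end Slices

theorem Continuous.eventually_forall_uIcc_norm_le {X F : Type*} [TopologicalSpace X]
    [NormedAddCommGroup F] {g : ℝ × X → F} (hg : Continuous g) (a b : ℝ) (x : X) :
    ∃ C, ∀ᶠ y in 𝓝 x, ∀ t ∈ uIcc a b, ‖g (t, y)‖ ≤ C := by
  obtain ⟨C, hC⟩ := isCompact_uIcc.exists_bound_of_continuousOn
    (hg.comp (continuous_id.prodMk continuous_const)).continuousOn
  refine ⟨C + 1, isCompact_uIcc.eventually_forall_of_forall_eventually fun t ht => ?_⟩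
  have hcont : Continuous fun z : X × ℝ => ‖g (z.2, z.1)‖ := by fun_prop
  exact (hcont.continuousAt.eventually (gt_mem_nhds ((hC t ht).trans_lt (lt_add_one C)))).mono
    fun _ => le_of_lt

theorem HasDerivAt.eq_of_forall_ge_eq_intervalIntegral_add {F : Type*} [NormedAddCommGroup F]
    [NormedSpace ℝ F] [CompleteSpace F] {f g : ℝ → F} {f' c : F} {a r : ℝ}
    (hf : HasDerivAt f f' r) (hg : Continuous g) (har : a ≤ r)
    (hfg : ∀ t, a ≤ t → f t = (∫ s in a..t, g s) + c) : f' = g r := by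
  have hint : HasDerivWithinAt f (g r) (Ici a) r :=
    ((hg.integral_hasStrictDerivAt a r).hasDerivAt.add_const c).hasDerivWithinAt.congr
      (fun t ht => hfg t ht) (hfg r har)
  have hu := uniqueDiffOn_Ici a r har
  exact (hf.hasDerivWithinAt.derivWithin hu).symm.trans (hint.derivWithin hu)

section PartialGradient

variable {E : Type*} [NormedAddCommGroup E] [InnerProductSpace ℝ E] [CompleteSpace E]

theorem inner_gradient_slice {h : ℝ × E → ℝ} {t : ℝ} {y : E}
    (hh : DifferentiableAt ℝ h (t, y)) (v : E) :
    ⟪gradient (fun y => h (t, y)) y, v⟫ = fderiv ℝ h (t, y) (0, v) := by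
  rw [(hasFDerivAt_iff_hasGradientAt.mp hh.hasFDerivAt_slice).gradient, toDual_symm_apply]
  rfl

theorem continuous_gradient_slice {h : ℝ × E → ℝ} (hh : ContDiff ℝ 1 h) :
    Continuous fun p : ℝ × E => gradient (fun y => h (p.1, y)) p.2 := by
  have hslice : (fun p : ℝ × E => gradient (fun y => h (p.1, y)) p.2) =
      fun p => (toDual ℝ E).symm ((fderiv ℝ h p).comp (inr ℝ ℝ E)) := by
    funext p
    exact (hasFDerivAt_iff_hasGradientAt.mp
      (hh.differentiable one_ne_zero p).hasFDerivAt_slice).gradient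
  rw [hslice]
  exact (toDual ℝ E).symm.continuous.comp
    (((compL ℝ E (ℝ × E) ℝ).flip (inr ℝ ℝ E)).continuous.comp (hh.continuous_fderiv one_ne_zero))

theorem hasGradientAt_intervalIntegral {h : ℝ × E → ℝ} (hh : ContDiff ℝ 1 h) (a b : ℝ) (x : E) :
    HasGradientAt (fun y => ∫ t in a..b, h (t, y))
      (∫ t in a..b, gradient (fun y => h (t, y)) x) x := by
  have hgrad := continuous_gradient_slice hh
  have hslice (y : E) : Continuous fun t => h (t, y) := by fun_prop
  have hgrad_slice : Continuous fun t => gradient (fun y => h (t, y)) x :=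
    hgrad.comp (continuous_id.prodMk continuous_const)
  obtain ⟨C, hC⟩ := hgrad.eventually_forall_uIcc_norm_le a b x
  have hderiv := intervalIntegral.hasFDerivAt_integral_of_dominated_of_fderiv_le
    (F := fun y t => h (t, y)) (F' := fun y t => toDual ℝ E (gradient (fun y => h (t, y)) y))
    (μ := volume) (bound := fun _ => C) hC (.of_forall fun y => (hslice y).aestronglyMeasurable)
    ((hslice x).intervalIntegrable a b)
    ((toDual ℝ E).continuous.comp hgrad_slice).aestronglyMeasurable
    (.of_forall fun t ht y hy => by
      rw [LinearIsometryEquiv.norm_map]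
      exact hy t (uIoc_subset_uIcc ht))
    intervalIntegrable_const
    (.of_forall fun t _ y _ =>
      ((hh.differentiable one_ne_zero) (t, y)).hasFDerivAt_slice.differentiableAt.hasGradientAt)
  exact hderiv.congr_fderiv
    ((toDual ℝ E).toLinearIsometry.intervalIntegral_comp_comm
      fun t => gradient (fun y => h (t, y)) x)

theorem second_derivative_symmetric_of_hasGradientAt {f : E → ℝ} {g : E → E} {g' : E →L[ℝ] E}
    {x : E} (hf : ∀ y, HasGradientAt f (g y) y) (hg : HasFDerivAt g g' x) (v w : E) :
    ⟪g' v, w⟫ = ⟪g' w, v⟫ := by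
  simpa using second_derivative_symmetric (f' := fun y => toDual ℝ E (g y)) hf
    ((toDual ℝ E).toContinuousLinearEquiv.hasFDerivAt.comp x hg) v w

theorem inner_fderiv_comm_of_smul_eq_gradient_add {H : E → ℝ} {G f β : E → E} {c : ℝ} {x : E}
    (hc : c ≠ 0) (hH : ∀ y, HasGradientAt H (G y) y) (hf : DifferentiableAt ℝ f x)
    (hβ : DifferentiableAt ℝ β x) (hβsymm : ∀ v w, ⟪fderiv ℝ β x v, w⟫ = ⟪fderiv ℝ β x w, v⟫)
    (hfG : ∀ y, c • f y = G y + β y) (v w : E) :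
    ⟪fderiv ℝ f x v, w⟫ = ⟪fderiv ℝ f x w, v⟫ := by
  have hG : HasFDerivAt G (c • fderiv ℝ f x - fderiv ℝ β x) x := by
    rw [show G = fun y => c • f y - β y from funext fun y => eq_sub_of_add_eq (hfG y).symm]
    exact (hf.hasFDerivAt.const_smul c).sub hβ.hasFDerivAt
  have hsymm := second_derivative_symmetric_of_hasGradientAt hH hG v w
  simp only [sub_apply, smul_apply, inner_sub_left, real_inner_smul_left, hβsymm v w] at hsymm
  exact mul_left_cancel₀ hc (by linarith)

end PartialGradient

section ConeForm

variable {n : ℕ} {h : ℝ × EuclideanSpace ℝ (Fin n) → ℝ}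
  {α : ℝ × EuclideanSpace ℝ (Fin n) → EuclideanSpace ℝ (Fin n)}

theorem fderiv_coneParam_apply {p : ℝ × EuclideanSpace ℝ (Fin n)} (hh : DifferentiableAt ℝ h p)
    (hα : DifferentiableAt ℝ α p) (ξ : ℝ × EuclideanSpace ℝ (Fin n)) :
    fderiv ℝ (coneParam h α) p ξ = (ξ.1, fderiv ℝ h p ξ, ξ.2, fderiv ℝ α p ξ) := by
  have hΦ : HasFDerivAt (coneParam h α)
      ((fst ℝ ℝ _).prod ((fderiv ℝ h p).prod ((snd ℝ ℝ _).prod (fderiv ℝ α p)))) p :=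
    hasFDerivAt_fst.prodMk (hh.hasFDerivAt.prodMk (hasFDerivAt_snd.prodMk hα.hasFDerivAt))
  rw [hΦ.fderiv]
  rfl

variable {r : ℝ} {q : EuclideanSpace ℝ (Fin n)}

theorem coneForm_fderiv_coneParam (hh : DifferentiableAt ℝ h (r, q))
    (hα : DifferentiableAt ℝ α (r, q)) (ξ η : ℝ × EuclideanSpace ℝ (Fin n)) :
    coneForm (coneParam h α (r, q)) (fderiv ℝ (coneParam h α) (r, q) ξ)
        (fderiv ℝ (coneParam h α) (r, q) η) =
      ξ.1 * ⟪α (r, q) + r • fderiv ℝ α (r, q) (1, 0) - gradient (fun y => h (r, y)) q, η.2⟫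
        - η.1 * ⟪α (r, q) + r • fderiv ℝ α (r, q) (1, 0) - gradient (fun y => h (r, y)) q, ξ.2⟫
        + r * (⟪fderiv ℝ (fun y => α (r, y)) q ξ.2, η.2⟫
          - ⟪fderiv ℝ (fun y => α (r, y)) q η.2, ξ.2⟫) := by
  rw [fderiv_coneParam_apply hh hα, fderiv_coneParam_apply hh hα, hα.hasFDerivAt_slice.fderiv]
  simp only [coneForm, coneParam]
  rw [(fderiv ℝ α (r, q)).apply_prod_eq ξ, (fderiv ℝ α (r, q)).apply_prod_eq η,
    (fderiv ℝ h (r, q)).apply_prod_eq ξ, (fderiv ℝ h (r, q)).apply_prod_eq η]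
  simp only [inner_sub_left, inner_add_left, real_inner_smul_left, inner_gradient_slice hh,
    comp_apply, inr_apply, smul_eq_mul]
  ring

theorem lagrangian_at_iff (hr : r ≠ 0) (hh : DifferentiableAt ℝ h (r, q))
    (hα : DifferentiableAt ℝ α (r, q)) :
    (∀ ξ η : ℝ × EuclideanSpace ℝ (Fin n),
        coneForm (coneParam h α (r, q)) (fderiv ℝ (coneParam h α) (r, q) ξ)
          (fderiv ℝ (coneParam h α) (r, q) η) = 0) ↔
      HasDerivAt (fun t => t • α (t, q)) (gradient (fun y => h (r, y)) q) r ∧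
        ∀ v w, ⟪fderiv ℝ (fun y => α (r, y)) q v, w⟫ = ⟪fderiv ℝ (fun y => α (r, y)) q w, v⟫ := by
  have hderiv := hα.hasDerivAt_smul_slice
  simp only [coneForm_fderiv_coneParam hh hα]
  constructor
  · intro H
    refine ⟨hderiv.congr_deriv (sub_eq_zero.mp (ext_inner_right ℝ fun v => ?_)), fun v w => ?_⟩
    · simpa using H (1, 0) (0, v)
    · have hvw := H (0, v) (0, w)
      simp only [zero_mul, sub_zero, zero_add] at hvw
      exact sub_eq_zero.mp ((mul_eq_zero.mp hvw).resolve_left hr)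
  · rintro ⟨hgrad, hsymm⟩ ξ η
    rw [hderiv.unique hgrad, sub_self, hsymm]
    simp

end ConeForm

/-- The image of `Φ(r,q) = (r, h(r,q), q, α(r,q))` over `{r ≥ R₀}` is Lagrangian for the
symplectic form `d(r(p·dq - dz))` if and only if
`α(r,q) = (1/r)(∫_{R₀}^r ∇_q h(a,q) da + β(q))` for some closed one-form `β`. -/
theorem lagrangian_iff_integral_formula (n : ℕ) (R₀ : ℝ) (hR₀ : 0 < R₀)
    (h : ℝ × EuclideanSpace ℝ (Fin n) → ℝ) (hh : ContDiff ℝ 2 h)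
    (α : ℝ × EuclideanSpace ℝ (Fin n) → EuclideanSpace ℝ (Fin n)) (hα : ContDiff ℝ 1 α) :
    (∀ r : ℝ, R₀ ≤ r → ∀ q : EuclideanSpace ℝ (Fin n),
        ∀ ξ η : ℝ × EuclideanSpace ℝ (Fin n),
          coneForm (coneParam h α (r, q))
            (fderiv ℝ (coneParam h α) (r, q) ξ)
            (fderiv ℝ (coneParam h α) (r, q) η) = 0)
      ↔ (∃ β : EuclideanSpace ℝ (Fin n) → EuclideanSpace ℝ (Fin n),
          ContDiff ℝ 1 β ∧
          (∀ q v w : EuclideanSpace ℝ (Fin n),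
            (inner ℝ (fderiv ℝ β q v) w : ℝ) = (inner ℝ (fderiv ℝ β q w) v : ℝ)) ∧
          (∀ r : ℝ, R₀ ≤ r → ∀ q : EuclideanSpace ℝ (Fin n),
            r • α (r, q) =
              (∫ a in R₀..r, gradient (fun q' => h (a, q')) q) + β q)) := by
  have hh₁ : ContDiff ℝ 1 h := hh.of_le (by norm_num)
  have hhd := hh₁.differentiable one_ne_zero
  have hαd := hα.differentiable one_ne_zero
  have hgrad (q) : Continuous fun a => gradient (fun q' => h (a, q')) q :=
    (continuous_gradient_slice hh₁).comp (continuous_id.prodMk continuous_const)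
  have hL (r) (hr : R₀ ≤ r) (q) := lagrangian_at_iff (hR₀.trans_le hr).ne' (hhd (r, q)) (hαd (r, q))
  constructor
  · intro H
    have hH (r) (hr : R₀ ≤ r) (q) := (hL r hr q).mp (H r hr q)
    refine ⟨fun q => R₀ • α (R₀, q), (hα.comp (contDiff_const.prodMk contDiff_id)).const_smul R₀,
      fun q v w => ?_, fun r hr q => ?_⟩
    · rw [fderiv_fun_const_smul (hαd _).hasFDerivAt_slice.differentiableAt]
      simp only [smul_apply, real_inner_smul_left, (hH R₀ le_rfl q).2 v w]
    · rw [intervalIntegral.integral_eq_sub_of_hasDerivAt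
        (fun a ha => (hH a (uIcc_of_le hr ▸ ha).1 q).1) ((hgrad q).intervalIntegrable _ _)]
      abel
  · rintro ⟨β, hβ, hβsymm, hformula⟩ r hr q
    refine (hL r hr q).mpr ⟨(hαd (r, q)).hasDerivAt_smul_slice.congr_deriv ?_, ?_⟩
    · exact (hαd (r, q)).hasDerivAt_smul_slice.eq_of_forall_ge_eq_intervalIntegral_add (hgrad q) hr
        fun t ht => hformula t ht q
    · exact inner_fderiv_comm_of_smul_eq_gradient_add (hR₀.trans_le hr).ne'
        (hasGradientAt_intervalIntegral hh₁ R₀ r) (hαd (r, q)).hasFDerivAt_slice.differentiableAt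
        (hβ.differentiable one_ne_zero q) (hβsymm q) (hformula r hr)
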